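/- arXiv:1706.09334 — 8 statements merged into one kernel-verified Lean document; each statement's English description precedes it below -/
import Mathlib

section
/- Let L be a finite set, E a symmetric relation on L, s₁, s₂ : L → ℝ*, and define for each ℓ the value s(ℓ) = max over subsets A ⊆ L with ℓ ∈ A of min( min_{ℓ' ∈ A} s₁(ℓ'), min_{ℓ'' ∈ B⁺(A)} s₂(ℓ'') ), where B⁺(A) = {ℓ ∉ A | ∃ℓ' ∈ A with (ℓ',ℓ) ∈ E} is the external boundary. Let 𝒳 be the iteration 𝒳(0,ℓ) = s₁(ℓ), 𝒳(i+1,ℓ) = min(𝒳(i,ℓ), min_{ℓ' : ℓ E ℓ'} max(𝒳(i,ℓ'), s₂(ℓ'))). Then for all i and all ℓ, 𝒳(i,ℓ) ≥ s(ℓ). -/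
/-- The fixed-point iteration of the quantitative surrounded monitoring algorithm:
`X 0 ℓ = s₁ ℓ` and
`X (i+1) ℓ = min (X i ℓ) (⨅ neighbours ℓ' of ℓ, max (X i ℓ') (s₂ ℓ'))`.
The infimum over an empty set of neighbours is `+∞`. -/
noncomputable def XIter {L : Type*} (E : L → L → Prop) (s₁ s₂ : L → EReal) :
    ℕ → L → EReal
  | 0, ℓ => s₁ ℓ
  | (i+1), ℓ =>
      min (XIter E s₁ s₂ i ℓ)
        (⨅ ℓ' : {ℓ' // E ℓ ℓ'}, max (XIter E s₁ s₂ i ℓ') (s₂ ℓ'))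

/-- The external boundary `B⁺(A)` of a set of locations `A`:
locations not in `A` directly connected to an element of `A`. -/
def extBoundary {L : Type*} (E : L → L → Prop) (A : Set L) : Set L :=
  {ℓ | ℓ ∉ A ∧ ∃ ℓ' ∈ A, E ℓ' ℓ}

/-- The quantitative surrounded score:
`s ℓ = ⨆ {A ⊆ L | ℓ ∈ A}, min (⨅ ℓ' ∈ A, s₁ ℓ') (⨅ ℓ'' ∈ B⁺(A), s₂ ℓ'')`. -/
noncomputable def surrScore {L : Type*} (E : L → L → Prop) (s₁ s₂ : L → EReal)
    (ℓ : L) : EReal :=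
  ⨆ A ∈ {A : Set L | ℓ ∈ A},
    min (⨅ ℓ' ∈ A, s₁ ℓ') (⨅ ℓ'' ∈ extBoundary E A, s₂ ℓ'')

lemma xiter_key {L : Type*} (E : L → L → Prop) (s₁ s₂ : L → EReal) (A : Set L) :
    ∀ (i : ℕ) (ℓ : L), ℓ ∈ A →
      min (⨅ ℓ' ∈ A, s₁ ℓ') (⨅ ℓ'' ∈ extBoundary E A, s₂ ℓ'') ≤ XIter E s₁ s₂ i ℓ := by
  intro i
  induction i with
  | zero =>
      intro ℓ hℓ
      exact le_trans (min_le_left _ _) (biInf_le _ hℓ)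
  | succ i ih =>
      intro ℓ hℓ
      refine le_min (ih ℓ hℓ) (le_iInf fun ⟨ℓ', hE'⟩ => ?_)
      by_cases h : ℓ' ∈ A
      · exact le_trans (ih ℓ' h) (le_max_left _ _)
      · refine le_trans (min_le_right _ _) (le_trans ?_ (le_max_right _ _))
        exact biInf_le _ ⟨h, ℓ, hℓ, hE'⟩

theorem stmt6 {L : Type*} [Fintype L] (E : L → L → Prop) (hE : Symmetric E)
    (s₁ s₂ : L → EReal) :
    ∀ (i : ℕ) (ℓ : L), surrScore E s₁ s₂ ℓ ≤ XIter E s₁ s₂ i ℓ := by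
  intro i ℓ
  refine iSup₂_le fun A hA => xiter_key E s₁ s₂ A i ℓ hA
end

section
/- Let L be a finite set, E a symmetric relation on L, s₁, s₂ : L → ℝ*, and define s(ℓ) = max over subsets A ⊆ L with ℓ ∈ A of min( min_{ℓ' ∈ A} s₁(ℓ'), min_{ℓ'' ∈ B⁺(A)} s₂(ℓ'') ). Let 𝒳 be the iteration 𝒳(0,ℓ) = s₁(ℓ), 𝒳(i+1,ℓ) = min(𝒳(i,ℓ), min_{ℓ' : ℓ E ℓ'} max(𝒳(i,ℓ'), s₂(ℓ'))). Then the limit (eventual stable value) of 𝒳(i,ℓ) as i → ∞ equals s(ℓ) for every ℓ ∈ L. -/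
/-! Every candidate region `A ∋ ℓ` bounds the iteration from below at `ℓ`, by induction on the
number of steps. Conversely the iteration decreases within a finite set of values, so it reaches
a fixed point `Y`; the superlevel set `{ℓ' | Y ℓ ≤ Y ℓ'}` is then a candidate region whose value
is at least `Y ℓ`, since leaving it through an edge costs at least `Y ℓ` in `s₂`. -/

theorem Antitone.exists_forall_ge_eq_of_finite_range {α : Type*} [PartialOrder α] {f : ℕ → α}
    (hf : Antitone f) (hfin : (Set.range f).Finite) : ∃ K, ∀ j ≥ K, f j = f K := by
  obtain ⟨K, -, hK⟩ :=
    Set.Finite.exists_minimalFor' f Set.univ (Set.image_univ ▸ hfin) ⟨0, trivial⟩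
  exact ⟨K, fun j hj => le_antisymm (hf hj) (hK trivial (hf hj))⟩

theorem iInf_mem_of_forall_mem {α ι : Type*} [CompleteLinearOrder α] [Finite ι] {S : Set α}
    (htop : ⊤ ∈ S) {f : ι → α} (hf : ∀ i, f i ∈ S) : ⨅ i, f i ∈ S := by
  rcases isEmpty_or_nonempty ι with hι | hι
  · rwa [iInf_of_empty]
  · obtain ⟨i, hi⟩ := exists_eq_ciInf_of_finite (f := f)
    exact hi ▸ hf i

noncomputable def regionScore {L : Type*} (E : L → L → Prop) (s₁ s₂ : L → EReal)
    (A : Set L) : EReal :=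
  min (⨅ ℓ' ∈ A, s₁ ℓ') (⨅ ℓ'' ∈ extBoundary E A, s₂ ℓ'')

section

variable {L : Type*} {E : L → L → Prop} {s₁ s₂ : L → EReal}

namespace XIter

theorem succ_le (i : ℕ) (ℓ : L) : XIter E s₁ s₂ (i + 1) ℓ ≤ XIter E s₁ s₂ i ℓ :=
  min_le_left _ _

theorem antitone : Antitone (XIter E s₁ s₂) :=
  antitone_nat_of_succ_le fun i ℓ => succ_le i ℓ

theorem le_max_of_succ_eq {i : ℕ} (h : XIter E s₁ s₂ (i + 1) = XIter E s₁ s₂ i) {ℓ ℓ' : L}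
    (hℓℓ' : E ℓ ℓ') : XIter E s₁ s₂ i ℓ ≤ max (XIter E s₁ s₂ i ℓ') (s₂ ℓ') :=
  calc XIter E s₁ s₂ i ℓ = XIter E s₁ s₂ (i + 1) ℓ := by rw [h]
    _ ≤ ⨅ ℓ'' : {ℓ'' // E ℓ ℓ''}, max (XIter E s₁ s₂ i ℓ'') (s₂ ℓ'') := min_le_right _ _
    _ ≤ max (XIter E s₁ s₂ i ℓ') (s₂ ℓ') := iInf_le (fun ℓ'' : {ℓ'' // E ℓ ℓ''} => _) ⟨ℓ', hℓℓ'⟩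

theorem mem_range_union [Finite L] (i : ℕ) (ℓ : L) :
    XIter E s₁ s₂ i ℓ ∈ Set.range s₁ ∪ Set.range s₂ ∪ {⊤} := by
  induction i generalizing ℓ with
  | zero => exact Or.inl (Or.inl ⟨ℓ, rfl⟩)
  | succ i ih =>
    rcases min_choice (XIter E s₁ s₂ i ℓ)
      (⨅ ℓ' : {ℓ' // E ℓ ℓ'}, max (XIter E s₁ s₂ i ℓ') (s₂ ℓ')) with h | h <;> rw [XIter, h]
    · exact ih ℓ
    refine iInf_mem_of_forall_mem (S := Set.range s₁ ∪ Set.range s₂ ∪ {⊤}) (Or.inr rfl)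
      fun ℓ' => ?_
    rcases max_choice (XIter E s₁ s₂ i ℓ') (s₂ ℓ') with h' | h' <;> rw [h']
    · exact ih ℓ'
    · exact Or.inl (Or.inr ⟨ℓ', rfl⟩)

theorem exists_forall_ge_eq [Finite L] : ∃ K, ∀ j ≥ K, XIter E s₁ s₂ j = XIter E s₁ s₂ K := by
  refine antitone.exists_forall_ge_eq_of_finite_range ?_
  have hS := ((Set.finite_range s₁).union (Set.finite_range s₂)).union (Set.finite_singleton ⊤)
  exact (Set.Finite.pi' fun _ : L => hS).subset (by rintro _ ⟨i, rfl⟩; exact mem_range_union i)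

theorem regionScore_le (A : Set L) (i : ℕ) {ℓ : L} (hℓ : ℓ ∈ A) :
    regionScore E s₁ s₂ A ≤ XIter E s₁ s₂ i ℓ := by
  induction i generalizing ℓ with
  | zero => exact (min_le_left _ _).trans (iInf₂_le ℓ hℓ)
  | succ i ih =>
    refine le_min (ih hℓ) (le_iInf fun ⟨ℓ'', hℓℓ''⟩ => ?_)
    by_cases hℓ'' : ℓ'' ∈ A
    · exact (ih hℓ'').trans (le_max_left _ _)
    · exact ((min_le_right _ _).trans (iInf₂_le ℓ'' ⟨hℓ'', ℓ, hℓ, hℓℓ''⟩)).trans (le_max_right _ _)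

end XIter

theorem surrScore_le_XIter (i : ℕ) (ℓ : L) :
    surrScore E s₁ s₂ ℓ ≤ XIter E s₁ s₂ i ℓ :=
  iSup₂_le fun A hA => XIter.regionScore_le A i hA

theorem le_surrScore_of_le_max {Y : L → EReal}
    (h₁ : ∀ ℓ, Y ℓ ≤ s₁ ℓ) (h₂ : ∀ ℓ ℓ', E ℓ ℓ' → Y ℓ ≤ max (Y ℓ') (s₂ ℓ')) (ℓ : L) :
    Y ℓ ≤ surrScore E s₁ s₂ ℓ := by
  refine le_trans (le_min ?_ ?_) (le_iSup₂ (f := fun A (_ : ℓ ∈ A) => regionScore E s₁ s₂ A)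
    {ℓ' | Y ℓ ≤ Y ℓ'} (le_refl (Y ℓ)))
  · exact le_iInf₂ fun ℓ' hℓ' => hℓ'.trans (h₁ ℓ')
  · refine le_iInf₂ fun ℓ'' ⟨hℓ'', ℓ', hℓ', hℓ'ℓ''⟩ => ?_
    exact (le_max_iff.mp (hℓ'.trans (h₂ ℓ' ℓ'' hℓ'ℓ''))).resolve_left hℓ''

end

theorem stmt7_general {L : Type*} [Fintype L] (E : L → L → Prop)
    (s₁ s₂ : L → EReal) :
    ∃ K : ℕ, ∀ j ≥ K, ∀ ℓ : L, XIter E s₁ s₂ j ℓ = surrScore E s₁ s₂ ℓ := by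
  obtain ⟨K, hK⟩ := XIter.exists_forall_ge_eq (E := E) (s₁ := s₁) (s₂ := s₂)
  have h₁ : ∀ ℓ, XIter E s₁ s₂ K ℓ ≤ s₁ ℓ := fun ℓ => XIter.antitone (Nat.zero_le K) ℓ
  have h₂ : ∀ ℓ ℓ', E ℓ ℓ' → XIter E s₁ s₂ K ℓ ≤ max (XIter E s₁ s₂ K ℓ') (s₂ ℓ') :=
    fun _ _ => XIter.le_max_of_succ_eq (hK (K + 1) K.le_succ)
  refine ⟨K, fun j hj ℓ => ?_⟩
  rw [hK j hj]
  exact le_antisymm (le_surrScore_of_le_max h₁ h₂ ℓ) (surrScore_le_XIter K ℓ)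

theorem stmt7 {L : Type*} [Fintype L] (E : L → L → Prop) (hE : Symmetric E)
    (s₁ s₂ : L → EReal) :
    ∃ K : ℕ, ∀ j ≥ K, ∀ ℓ : L, XIter E s₁ s₂ j ℓ = surrScore E s₁ s₂ ℓ :=
  stmt7_general E s₁ s₂
end

section
/- Let f, f̃ : ℝ → ℝ with ‖f(t) − f̃(t)‖ ≤ ε for all t, f Lipschitz with constant K, I = [t₁,t₂] an interval with endpoints multiples of h > 0, and Î the discretization {t₁, t₁+h, ..., t₂}. Define g(t) = max_{t' ∈ t ⊕ I} f(t') and g̃(t) = max_{t' ∈ t ⊕ Î} f̃(t'), where t ⊕ I = [t+t₁, t+t₂]. Then ‖g(t) − g̃(t)‖ ≤ Kh/2 + ε for all t. -/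
/-! Every point of `[a, a + n h]` lies within `h / 2` of the grid `a, a + h, …, a + n h`, so by the
Lipschitz bound the continuous maximum exceeds the value of `f` at some grid point by at most
`K h / 2`, and replacing `f` by `f̃` costs at most `ε` more. Conversely every grid point lies in the
interval, so the grid maximum of `f̃` exceeds the continuous maximum of `f` by at most `ε`. -/

open Set

def grid (a h : ℝ) (n : ℕ) : Set ℝ := {x | ∃ j : ℕ, j ≤ n ∧ x = a + j * h}

lemma grid_finite (a h : ℝ) (n : ℕ) : (grid a h n).Finite :=
  ((finite_Iic n).image fun j : ℕ => a + j * h).subset <| by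
    rintro x ⟨j, hj, rfl⟩
    exact ⟨j, hj, rfl⟩

lemma grid_subset_Icc {a h : ℝ} (hh : 0 ≤ h) (n : ℕ) : grid a h n ⊆ Icc a (a + n * h) := by
  rintro x ⟨j, hj, rfl⟩
  have hjn : (j : ℝ) ≤ n := by exact_mod_cast hj
  exact ⟨by nlinarith [j.cast_nonneg (α := ℝ)], by nlinarith⟩

lemma exists_mem_grid_abs_sub_le {a h x : ℝ} (hh : 0 < h) {n : ℕ} (hx : x ∈ Icc a (a + n * h)) :
    ∃ y ∈ grid a h n, |x - y| ≤ h / 2 := by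
  set r := (x - a) / h
  have hr0 : 0 ≤ r := div_nonneg (by linarith [hx.1]) hh.le
  have hrn : r ≤ n := (div_le_iff₀ hh).2 (by linarith [hx.2])
  -- the nearest grid index is `r` rounded to the nearest natural number
  set j := ⌊r + 1 / 2⌋₊
  have hjn : j ≤ n := Nat.lt_succ_iff.1 <| (Nat.floor_lt (by linarith)).2 (by push_cast; linarith)
  have hj_le : (j : ℝ) ≤ r + 1 / 2 := Nat.floor_le (by linarith)
  have hj_gt : r + 1 / 2 < j + 1 := Nat.lt_floor_add_one _
  have hx_eq : x = a + r * h := by rw [div_mul_cancel₀ _ hh.ne']; ring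
  refine ⟨a + j * h, ⟨j, hjn, rfl⟩, abs_le.2 ⟨?_, ?_⟩⟩ <;> rw [hx_eq] <;> nlinarith

lemma csSup_image_le_csSup_image_add {α β : Type*} {s : Set α} {t : Set β} {f : α → ℝ}
    {g : β → ℝ} {c : ℝ} (hs : s.Nonempty) (hg : BddAbove (g '' t))
    (hfg : ∀ x ∈ s, ∃ y ∈ t, f x ≤ g y + c) : sSup (f '' s) ≤ sSup (g '' t) + c := by
  refine csSup_le (hs.image f) ?_
  rintro _ ⟨x, hx, rfl⟩
  obtain ⟨y, hy, hxy⟩ := hfg x hx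
  exact hxy.trans (add_le_add_left (le_csSup hg ⟨y, hy, rfl⟩) c)

theorem abs_sSup_Icc_sub_sSup_grid_le {f g : ℝ → ℝ} {K : NNReal} {ε a h : ℝ} (hh : 0 < h)
    (n : ℕ) (hf : LipschitzWith K f) (hfg : ∀ x, |f x - g x| ≤ ε) :
    |sSup (f '' Icc a (a + n * h)) - sSup (g '' grid a h n)| ≤ K * h / 2 + ε := by
  have hε : 0 ≤ ε := (abs_nonneg _).trans (hfg 0)
  have hKh : 0 ≤ (K : ℝ) * h / 2 := by positivity
  have hg_le : ∀ x, g x ≤ f x + ε := fun x => by linarith [(abs_le.1 (hfg x)).1]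
  have hf_le : ∀ x, f x ≤ g x + ε := fun x => by linarith [(abs_le.1 (hfg x)).2]
  have hIcc : (Icc a (a + n * h)).Nonempty := nonempty_Icc.2 (le_add_of_nonneg_right (by positivity))
  have hgrid : (grid a h n).Nonempty := ⟨a, 0, n.zero_le, by simp⟩
  have upper : sSup (f '' Icc a (a + n * h)) ≤ sSup (g '' grid a h n) + (K * h / 2 + ε) := by
    refine csSup_image_le_csSup_image_add hIcc ((grid_finite a h n).image g).bddAbove ?_
    intro x hx
    obtain ⟨y, hy, hxy⟩ := exists_mem_grid_abs_sub_le hh hx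
    refine ⟨y, hy, ?_⟩
    calc f x ≤ f y + K * dist x y := hf.le_add_mul x y
      _ ≤ g y + ε + K * (h / 2) := add_le_add (hf_le y) (by gcongr; exact hxy)
      _ = g y + (K * h / 2 + ε) := by ring
  have lower : sSup (g '' grid a h n) ≤ sSup (f '' Icc a (a + n * h)) + ε :=
    csSup_image_le_csSup_image_add hgrid (isCompact_Icc.image hf.continuous).bddAbove
      fun x hx => ⟨x, grid_subset_Icc hh.le n hx, hg_le x⟩
  rw [abs_sub_le_iff]
  constructor <;> linarith

theorem stmt10 (f ft : ℝ → ℝ) (ε K h : ℝ) (hK : 0 ≤ K) (hh : 0 < h)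
    (k₁ k₂ : ℕ) (hk : k₁ ≤ k₂)
    (hf : LipschitzWith K.toNNReal f)
    (hft : ∀ t : ℝ, |f t - ft t| ≤ ε) (t : ℝ) :
    |sSup (f '' Set.Icc (t + k₁ * h) (t + k₂ * h)) -
      sSup (ft '' {x | ∃ j : ℕ, j ≤ k₂ - k₁ ∧ x = t + k₁ * h + j * h})| ≤
      K * h / 2 + ε := by
  have hk₂ : t + k₂ * h = t + k₁ * h + ↑(k₂ - k₁) * h := by
    rw [Nat.cast_sub hk]
    ring
  rw [hk₂]
  have key := abs_sSup_Icc_sub_sSup_grid_le (a := t + k₁ * h) hh (k₂ - k₁) hf hft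
  rwa [Real.coe_toNNReal K hK] at key
end

section
/- Let f : ℝ → ℝ be Lipschitz with constant K, I = [t₁,t₂] with t₁ = k₁h, t₂ = k₂h for natural numbers k₁ ≤ k₂ and h > 0, and Î = {k₁h, (k₁+1)h, ..., k₂h}. Define g(t) = max_{t' ∈ t ⊕ I} f(t') and ĝ(t) = max_{t' ∈ t ⊕ Î} f(t'). Then |g(t) − ĝ(t)| ≤ Kh/2 for all t. -/
/-!
Every point of the interval lies within `h / 2` of a grid point, so by the Lipschitz bound each
value of `f` on the interval exceeds some value on the grid by at most `K h / 2`; conversely the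
grid is contained in the interval, so its supremum is the smaller one.
-/

open Set NNReal

def uniformGrid (a h : ℝ) (n : ℕ) : Set ℝ := {x | ∃ j : ℕ, j ≤ n ∧ x = a + j * h}

theorem uniformGrid_nonempty (a h : ℝ) (n : ℕ) : (uniformGrid a h n).Nonempty :=
  ⟨a, 0, Nat.zero_le n, by simp⟩

theorem uniformGrid_subset_Icc {a h : ℝ} (hh : 0 ≤ h) (n : ℕ) :
    uniformGrid a h n ⊆ Icc a (a + n * h) := by
  rintro _ ⟨j, hj, rfl⟩
  have hjn : (j : ℝ) ≤ n := by exact_mod_cast hj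
  exact ⟨by nlinarith [j.cast_nonneg (α := ℝ)], by nlinarith⟩

theorem exists_mem_uniformGrid_dist_le_half {a h x : ℝ} {n : ℕ} (hh : 0 < h)
    (hx : x ∈ Icc a (a + n * h)) : ∃ y ∈ uniformGrid a h n, dist x y ≤ h / 2 := by
  set u := (x - a) / h
  have hxu : x = a + u * h := by rw [div_mul_cancel₀ _ hh.ne']; ring
  have hu₀ : 0 ≤ u := div_nonneg (by linarith [hx.1]) hh.le
  have hun : u ≤ n := by rw [div_le_iff₀ hh]; linarith [hx.2]
  set j := ⌊u + 1 / 2⌋₊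
  have hj_le : (j : ℝ) ≤ u + 1 / 2 := Nat.floor_le (by linarith)
  have hj_gt : u + 1 / 2 < j + 1 := Nat.lt_floor_add_one _
  have hjn : j ≤ n := Nat.lt_succ_iff.1 <| (Nat.floor_lt (by linarith)).2 <| by push_cast; linarith
  refine ⟨a + j * h, ⟨j, hjn, rfl⟩, ?_⟩
  have hdist : |u - j| ≤ 1 / 2 := abs_le.2 ⟨by linarith, by linarith⟩
  calc dist x (a + j * h) = |u - j| * h := by
        rw [Real.dist_eq, hxu, show a + u * h - (a + j * h) = (u - j) * h by ring, abs_mul,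
          abs_of_pos hh]
    _ ≤ 1 / 2 * h := by gcongr
    _ = h / 2 := by ring

section

variable {α : Type*} [PseudoMetricSpace α] {f : α → ℝ} {K : ℝ≥0} {S D : Set α} {δ : ℝ}

theorem LipschitzWith.sSup_image_le_add_of_forall_exists_dist_le (hf : LipschitzWith K f)
    (hS : S.Nonempty) (hD : BddAbove (f '' D)) (hcover : ∀ x ∈ S, ∃ y ∈ D, dist x y ≤ δ) :
    sSup (f '' S) ≤ sSup (f '' D) + K * δ := by
  refine csSup_le (hS.image f) ?_
  rintro _ ⟨x, hx, rfl⟩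
  obtain ⟨y, hy, hxy⟩ := hcover x hx
  have hfxy : f x - f y ≤ K * dist x y :=
    (le_abs_self _).trans (Real.dist_eq (f x) (f y) ▸ hf.dist_le_mul x y)
  calc f x ≤ f y + K * dist x y := by linarith
    _ ≤ sSup (f '' D) + K * δ := add_le_add (le_csSup hD (mem_image_of_mem f hy)) (by gcongr)

theorem LipschitzWith.abs_sSup_image_sub_sSup_image_le (hf : LipschitzWith K f)
    (hDS : D ⊆ S) (hD : D.Nonempty) (hS : BddAbove (f '' S))
    (hcover : ∀ x ∈ S, ∃ y ∈ D, dist x y ≤ δ) :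
    |sSup (f '' S) - sSup (f '' D)| ≤ K * δ := by
  obtain ⟨y₀, hy₀⟩ := hD
  have hδ : 0 ≤ δ := by
    obtain ⟨_, _, h⟩ := hcover y₀ (hDS hy₀)
    exact dist_nonneg.trans h
  have hmono : sSup (f '' D) ≤ sSup (f '' S) :=
    csSup_le_csSup hS (Nonempty.image f ⟨y₀, hy₀⟩) (image_mono hDS)
  have hnet := hf.sSup_image_le_add_of_forall_exists_dist_le ⟨y₀, hDS hy₀⟩
    (hS.mono (image_mono hDS)) hcover
  rw [abs_sub_le_iff]
  exact ⟨by linarith, by linarith [mul_nonneg K.coe_nonneg hδ]⟩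

end

theorem stmt11 (f : ℝ → ℝ) (K h : ℝ) (hK : 0 ≤ K) (hh : 0 < h)
    (k₁ k₂ : ℕ) (hk : k₁ ≤ k₂)
    (hf : LipschitzWith K.toNNReal f) (t : ℝ) :
    |sSup (f '' Set.Icc (t + k₁ * h) (t + k₂ * h)) -
      sSup (f '' {x | ∃ j : ℕ, j ≤ k₂ - k₁ ∧ x = t + k₁ * h + j * h})| ≤
      K * h / 2 := by
  have hend : t + k₂ * h = t + k₁ * h + (k₂ - k₁ : ℕ) * h := by
    push_cast [Nat.cast_sub hk]; ring
  have key := hf.abs_sSup_image_sub_sSup_image_le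
    (uniformGrid_subset_Icc (a := t + k₁ * h) hh.le (k₂ - k₁)) (uniformGrid_nonempty _ _ _) (isCompact_Icc.image hf.continuous).bddAbove
    (fun _ hx => exists_mem_uniformGrid_dist_le_half hh hx)
  rw [← hend, Real.coe_toNNReal K hK, ← mul_div_assoc] at key
  exact key
end

section
/- Soundness of the quantitative surrounded score: let L be finite, E symmetric, and suppose b₁, b₂ : L → Bool are Boolean satisfactions and s₁, s₂ : L → ℝ real-valued scores such that for all ℓ, s_i(ℓ) > 0 implies b_i(ℓ) = true and s_i(ℓ) < 0 implies b_i(ℓ) = false (i = 1,2). Define s(ℓ) = max_{A ⊆ L, ℓ ∈ A} min( min_{ℓ' ∈ A} s₁(ℓ'), min_{ℓ'' ∈ B⁺(A)} s₂(ℓ'') ) and define Boolean satisfaction Sat(ℓ) to hold iff there exists A ⊆ L with ℓ ∈ A, b₁ true on all of A, and b₂ true on all of B⁺(A). Then s(ℓ) > 0 implies Sat(ℓ), and s(ℓ) < 0 implies ¬Sat(ℓ). -/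
theorem stmt13 {L : Type*} [Fintype L] (E : L → L → Prop) (hE : Symmetric E)
    (b₁ b₂ : L → Bool) (s₁ s₂ : L → ℝ)
    (h₁ : ∀ ℓ, (0 < s₁ ℓ → b₁ ℓ = true) ∧ (s₁ ℓ < 0 → b₁ ℓ = false))
    (h₂ : ∀ ℓ, (0 < s₂ ℓ → b₂ ℓ = true) ∧ (s₂ ℓ < 0 → b₂ ℓ = false))
    (ℓ : L) :
    (((⨆ A ∈ {A : Set L | ℓ ∈ A},
        min (⨅ ℓ' ∈ A, (s₁ ℓ' : EReal)) (⨅ ℓ'' ∈ extBoundary E A, (s₂ ℓ'' : EReal))) > 0 →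
      ∃ A : Set L, ℓ ∈ A ∧ (∀ ℓ' ∈ A, b₁ ℓ' = true) ∧
        (∀ ℓ'' ∈ extBoundary E A, b₂ ℓ'' = true)) ∧
     ((⨆ A ∈ {A : Set L | ℓ ∈ A},
        min (⨅ ℓ' ∈ A, (s₁ ℓ' : EReal)) (⨅ ℓ'' ∈ extBoundary E A, (s₂ ℓ'' : EReal))) < 0 →
      ¬ ∃ A : Set L, ℓ ∈ A ∧ (∀ ℓ' ∈ A, b₁ ℓ' = true) ∧
        (∀ ℓ'' ∈ extBoundary E A, b₂ ℓ'' = true))) := by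
  constructor
  · intro hpos
    rw [gt_iff_lt, lt_iSup_iff] at hpos
    obtain ⟨A, hA⟩ := hpos
    rw [lt_iSup_iff] at hA
    obtain ⟨hℓA, h⟩ := hA
    refine ⟨A, hℓA, ?_, ?_⟩
    · intro ℓ' hℓ'
      refine (h₁ ℓ').1 ?_
      have : (0 : EReal) < s₁ ℓ' := lt_of_lt_of_le (h.trans_le (min_le_left _ _)) (iInf₂_le ℓ' hℓ')
      exact_mod_cast this
    · intro ℓ'' hℓ''
      refine (h₂ ℓ'').1 ?_
      have : (0 : EReal) < s₂ ℓ'' := lt_of_lt_of_le (h.trans_le (min_le_right _ _)) (iInf₂_le ℓ'' hℓ'')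
      exact_mod_cast this
  · intro hneg ⟨A, hℓA, hb₁, hb₂⟩
    have hle : min (⨅ ℓ' ∈ A, (s₁ ℓ' : EReal)) (⨅ ℓ'' ∈ extBoundary E A, (s₂ ℓ'' : EReal)) < 0 :=
      lt_of_le_of_lt (le_iSup₂ (f := fun A _ =>
        min (⨅ ℓ' ∈ A, (s₁ ℓ' : EReal)) (⨅ ℓ'' ∈ extBoundary E A, (s₂ ℓ'' : EReal))) A hℓA) hneg
    rcases min_lt_iff.mp hle with h | h
    · rw [iInf_lt_iff] at h
      obtain ⟨ℓ', h⟩ := h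
      rw [iInf_lt_iff] at h
      obtain ⟨hℓ', h⟩ := h
      have : s₁ ℓ' < 0 := by exact_mod_cast h
      have := (h₁ ℓ').2 this
      simp [hb₁ ℓ' hℓ'] at this
    · rw [iInf_lt_iff] at h
      obtain ⟨ℓ'', h⟩ := h
      rw [iInf_lt_iff] at h
      obtain ⟨hℓ'', h⟩ := h
      have : s₂ ℓ'' < 0 := by exact_mod_cast h
      have := (h₂ ℓ'').2 this
      simp [hb₂ ℓ'' hℓ''] at this
end

section
/- In the Boolean surrounded monitoring algorithm, a location ℓ satisfying φ₁ is removed from V at iteration k if and only if the minimum of the set C_ℓ equals k, where C_ℓ = { i ∈ ℕ | ∃ a path p in G starting at ℓ with p(i) ⊨ ¬φ̂₁ and p(j) ⊨ ¬φ̂₂ for all j ∈ {1,...,i} }. Consequently ℓ is in the final set V if and only if ℓ ⊨ φ̂₁ and C_ℓ = ∅. -/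
/-- One iteration of the Boolean surrounded monitoring algorithm.
Given the current pair `(V, W)`, it removes from `V` the locations `N`
adjacent to `W`, and the new `W` consists of the removed locations not in `Q`. -/
def boolSurrStep {L : Type*} (E : L → L → Prop) (Q : Set L) :
    Set L × Set L → Set L × Set L :=
  fun VW =>
    (VW.1 \ {ℓ ∈ VW.1 | ∃ ℓ' ∈ VW.2, E ℓ ℓ'},
     {ℓ ∈ VW.1 | ∃ ℓ' ∈ VW.2, E ℓ ℓ'} \ Q)

/-- The sequence of pairs `(V, W)` computed by the Boolean surrounded
monitoring algorithm: `V₀ = {ℓ | φ₁ ℓ}`, `W₀ = B⁺(Q ∪ V₀)` where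
`Q = {ℓ | φ₂ ℓ}`, and each iteration applies `boolSurrStep`. -/
def boolSurrSeq {L : Type*} (E : L → L → Prop) (φ₁ φ₂ : L → Prop) :
    ℕ → Set L × Set L
  | 0 => ({ℓ | φ₁ ℓ}, extBoundary E ({ℓ | φ₂ ℓ} ∪ {ℓ | φ₁ ℓ}))
  | (k + 1) => boolSurrStep E {ℓ | φ₂ ℓ} (boolSurrSeq E φ₁ φ₂ k)

/-- The set `C_ℓ` of indices `i` such that some infinite path of the graph
starting at `ℓ` reaches a `¬φ₁` location at step `i` passing only through
`¬φ₂` locations at steps `1,…,i`. -/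
def badIdx {L : Type*} (E : L → L → Prop) (φ₁ φ₂ : L → Prop) (ℓ : L) : Set ℕ :=
  {i | ∃ p : ℕ → L, p 0 = ℓ ∧ (∀ j, E (p j) (p (j + 1))) ∧
    ¬ φ₁ (p i) ∧ ∀ j, 1 ≤ j → j ≤ i → ¬ φ₂ (p j)}

/-- Finite-walk version of `badIdx`. -/
def walkIdx {L : Type*} (E : L → L → Prop) (φ₁ φ₂ : L → Prop) (ℓ : L) : Set ℕ :=
  {i | ∃ p : ℕ → L, p 0 = ℓ ∧ (∀ j < i, E (p j) (p (j + 1))) ∧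
    ¬ φ₁ (p i) ∧ ∀ j, 1 ≤ j → j ≤ i → ¬ φ₂ (p j)}

section Aux
variable {L : Type*} {E : L → L → Prop} {φ₁ φ₂ : L → Prop}

lemma walkIdx_zero {ℓ : L} : 0 ∈ walkIdx E φ₁ φ₂ ℓ ↔ ¬ φ₁ ℓ := by
  constructor
  · rintro ⟨p, h0, -, h1, -⟩; rwa [h0] at h1
  · intro h
    exact ⟨fun _ => ℓ, rfl, fun j hj => absurd hj (by omega), h,
      fun j hj hj' => absurd (hj.trans hj') (by omega)⟩

lemma walkIdx_succ {ℓ : L} {i : ℕ} :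
    i + 1 ∈ walkIdx E φ₁ φ₂ ℓ ↔
      ∃ m, E ℓ m ∧ ¬ φ₂ m ∧ i ∈ walkIdx E φ₁ φ₂ m := by
  constructor
  · rintro ⟨p, h0, he, h1, h2⟩
    refine ⟨p 1, h0 ▸ he 0 (by omega), h2 1 le_rfl (by omega),
      fun j => p (j + 1), rfl, fun j hj => he (j + 1) (by omega), h1,
      fun j hj hj' => h2 (j + 1) (by omega) (by omega)⟩
  · rintro ⟨m, hEm, hm2, q, hq0, hqe, hq1, hq2⟩
    refine ⟨fun j => if j = 0 then ℓ else q (j - 1), rfl, ?_, ?_, ?_⟩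
    · intro j hj
      rcases Nat.eq_zero_or_pos j with rfl | hpos
      · simpa [hq0] using hEm
      · have h1 : j ≠ 0 := by omega
        have h2 : j + 1 ≠ 0 := by omega
        have h3 : j + 1 - 1 = (j - 1) + 1 := by omega
        simp only [h1, h2, if_false, h3]
        exact hqe (j - 1) (by omega)
    · simpa using hq1
    · intro j hj hj'
      have h1 : j ≠ 0 := by omega
      simp only [h1, if_false]
      rcases Nat.eq_zero_or_pos (j - 1) with h | h
      · rw [h, hq0]; exact hm2
      · exact hq2 (j - 1) (by omega) (by omega)

lemma badIdx_eq (hE : Symmetric E) {ℓ : L} (hℓ : φ₁ ℓ) :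
    badIdx E φ₁ φ₂ ℓ = walkIdx E φ₁ φ₂ ℓ := by
  ext i
  cases i with
  | zero =>
    refine iff_of_false ?_ ?_
    · rintro ⟨p, h0, -, h1, -⟩
      exact h1 (h0 ▸ hℓ)
    · rw [walkIdx_zero]; exact not_not_intro hℓ
  | succ n =>
    constructor
    · rintro ⟨p, h0, he, h1, h2⟩
      exact ⟨p, h0, fun j _ => he j, h1, h2⟩
    · rintro ⟨p, h0, he, h1, h2⟩
      set N := n + 1 with hN
      refine ⟨fun j => if j ≤ N then p j else if Even (j - N) then p N else p n,
        by simpa [hN] using h0, ?_, by simpa using h1, ?_⟩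
      · intro j
        have hEback : E (p N) (p n) := hE (he n (by omega))
        have hEfwd : E (p n) (p N) := he n (by omega)
        rcases lt_trichotomy j N with h | rfl | h
        · have : j ≤ N := by omega
          have : j + 1 ≤ N := by omega
          simp only [if_pos ‹j ≤ N›, if_pos ‹j + 1 ≤ N›]
          exact he j (by omega)
        · have h1 : ¬ (N + 1 ≤ N) := by omega
          have h2 : ¬ Even (N + 1 - N) := by simp
          simp only [le_refl, if_pos, h1, if_neg, h2]
          exact hEback
        · have h1 : ¬ (j ≤ N) := by omega
          have h2 : ¬ (j + 1 ≤ N) := by omega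
          have h3 : j + 1 - N = (j - N) + 1 := by omega
          by_cases hev : Even (j - N)
          · have : ¬ Even (j + 1 - N) := by rw [h3, Nat.even_add_one]; exact not_not_intro hev
            simp only [h1, if_neg, h2, if_pos hev, if_neg this, if_false]
            exact hEback
          · have : Even (j + 1 - N) := by rw [h3, Nat.even_add_one]; exact hev
            simp only [h1, if_neg, h2, if_neg hev, if_pos this, if_false]
            exact hEfwd
      · intro j hj hj'
        simp only [if_pos hj']
        exact h2 j hj hj'

end Aux

section Inv
variable {L : Type*} {E : L → L → Prop} {φ₁ φ₂ : L → Prop}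

lemma boolSurr_inv (hE : Symmetric E) : ∀ k : ℕ,
    ((boolSurrSeq E φ₁ φ₂ k).1 = {m | φ₁ m ∧ ∀ i ≤ k, i ∉ walkIdx E φ₁ φ₂ m}) ∧
    (∀ m ∈ (boolSurrSeq E φ₁ φ₂ k).2,
       ¬ φ₂ m ∧ k ∈ walkIdx E φ₁ φ₂ m ∧ ∀ i < k, i ∉ walkIdx E φ₁ φ₂ m) ∧
    (∀ m, ¬ φ₂ m → k ∈ walkIdx E φ₁ φ₂ m → (∀ i < k, i ∉ walkIdx E φ₁ φ₂ m) →
       (∃ ℓ', E m ℓ' ∧ φ₁ ℓ' ∧ ∀ i ≤ k, i ∉ walkIdx E φ₁ φ₂ ℓ') →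
       m ∈ (boolSurrSeq E φ₁ φ₂ k).2) := by
  intro k
  induction k with
  | zero =>
    refine ⟨?_, ?_, ?_⟩
    · ext m
      simp only [boolSurrSeq, Set.mem_setOf_eq]
      constructor
      · intro h
        refine ⟨h, fun i hi => ?_⟩
        interval_cases i
        rw [walkIdx_zero]
        exact not_not_intro h
      · exact fun h => h.1
    · rintro m ⟨hnot, ℓ', hmem, hEo⟩
      simp only [Set.mem_union, Set.mem_setOf_eq] at hnot
      push_neg at hnot
      exact ⟨hnot.1, walkIdx_zero.mpr hnot.2, fun i hi => absurd hi (by omega)⟩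
    · rintro m hm2 h0 - ⟨ℓ', hE', hφ', -⟩
      have hm1 : ¬ φ₁ m := walkIdx_zero.mp h0
      refine ⟨?_, ℓ', Or.inr hφ', hE hE'⟩
      simp only [Set.mem_union, Set.mem_setOf_eq]
      push_neg
      exact ⟨hm2, hm1⟩
  | succ k ih =>
    obtain ⟨hV, hW, hI3⟩ := ih
    set V := (boolSurrSeq E φ₁ φ₂ k).1 with hVdef
    set W := (boolSurrSeq E φ₁ φ₂ k).2 with hWdef
    -- key fact: for m in the "alive" set, adjacency to W ↔ k+1 ∈ walkIdx
    have fact1 : ∀ m, φ₁ m → (∀ i ≤ k, i ∉ walkIdx E φ₁ φ₂ m) →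
        ((∃ m' ∈ W, E m m') ↔ k + 1 ∈ walkIdx E φ₁ φ₂ m) := by
      intro m hφm hall
      constructor
      · rintro ⟨m', hm'W, hEmm'⟩
        obtain ⟨hm'2, hm'k, -⟩ := hW m' hm'W
        exact walkIdx_succ.mpr ⟨m', hEmm', hm'2, hm'k⟩
      · intro hk1
        obtain ⟨m', hEmm', hm'2, hm'k⟩ := walkIdx_succ.mp hk1
        have hmin' : ∀ i < k, i ∉ walkIdx E φ₁ φ₂ m' := by
          intro i hi hiC
          exact hall (i + 1) (by omega) (walkIdx_succ.mpr ⟨m', hEmm', hm'2, hiC⟩)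
        have := hI3 m' hm'2 hm'k hmin' ⟨m, hE hEmm', hφm, hall⟩
        exact ⟨m', this, hEmm'⟩
    have hseq : boolSurrSeq E φ₁ φ₂ (k + 1) =
        (V \ {x ∈ V | ∃ x' ∈ W, E x x'}, {x ∈ V | ∃ x' ∈ W, E x x'} \ {ℓ | φ₂ ℓ}) := rfl
    refine ⟨?_, ?_, ?_⟩
    · rw [hseq]
      ext m
      simp only [Set.mem_diff, Set.mem_setOf_eq, hV, not_and, not_exists]
      constructor
      · rintro ⟨⟨h1, h2⟩, hno⟩
        refine ⟨h1, fun i hi hiC => ?_⟩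
        rcases Nat.lt_succ_iff_lt_or_eq.mp (Nat.lt_succ_of_le hi) with h | rfl
        · exact h2 i (by omega) hiC
        · obtain ⟨m', hm'W, hEmm'⟩ := (fact1 m h1 h2).mpr hiC
          exact hno ⟨h1, h2⟩ m' hm'W hEmm'
      · rintro ⟨h1, h2⟩
        have h2' : ∀ i ≤ k, i ∉ walkIdx E φ₁ φ₂ m := fun i hi => h2 i (by omega)
        refine ⟨⟨h1, h2'⟩, fun _ m' hm'W hEmm' => ?_⟩
        exact h2 (k + 1) le_rfl ((fact1 m h1 h2').mp ⟨m', hm'W, hEmm'⟩)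
    · rw [hseq]
      rintro m ⟨⟨hmV, m', hm'W, hEmm'⟩, hmQ⟩
      simp only [Set.mem_setOf_eq] at hmQ
      rw [hV] at hmV
      obtain ⟨hφm, hall⟩ := hmV
      obtain ⟨hm'2, hm'k, -⟩ := hW m' hm'W
      exact ⟨hmQ, walkIdx_succ.mpr ⟨m', hEmm', hm'2, hm'k⟩,
        fun i hi => hall i (by omega)⟩
    · rw [hseq]
      rintro m hm2 hk1 hmin ⟨ℓ', hEmℓ', hφℓ', -⟩
      have hφm : φ₁ m := by
        by_contra h
        exact hmin 0 (by omega) (walkIdx_zero.mpr h)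
      have hallm : ∀ i ≤ k, i ∉ walkIdx E φ₁ φ₂ m := fun i hi => hmin i (by omega)
      obtain ⟨m', hm'W, hEmm'⟩ := (fact1 m hφm hallm).mpr hk1
      exact ⟨⟨hV ▸ ⟨hφm, hallm⟩, m', hm'W, hEmm'⟩, hm2⟩

end Inv

theorem stmt15 {L : Type*} [Fintype L] (E : L → L → Prop) (hE : Symmetric E)
    (φ₁ φ₂ : L → Prop) (ℓ : L) (hℓ : φ₁ ℓ) :
    (∀ k : ℕ, 1 ≤ k →
      ((ℓ ∈ (boolSurrSeq E φ₁ φ₂ (k - 1)).1 ∧ ℓ ∉ (boolSurrSeq E φ₁ φ₂ k).1) ↔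
        IsLeast (badIdx E φ₁ φ₂ ℓ) k)) ∧
    ((∀ k : ℕ, ℓ ∈ (boolSurrSeq E φ₁ φ₂ k).1) ↔
      (φ₁ ℓ ∧ badIdx E φ₁ φ₂ ℓ = ∅)) := by
  have hbad : badIdx E φ₁ φ₂ ℓ = walkIdx E φ₁ φ₂ ℓ := badIdx_eq hE hℓ
  have hmem : ∀ k, ℓ ∈ (boolSurrSeq E φ₁ φ₂ k).1 ↔
      ∀ i ≤ k, i ∉ walkIdx E φ₁ φ₂ ℓ := by
    intro k
    rw [(boolSurr_inv hE k).1]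
    simp only [Set.mem_setOf_eq, hℓ, true_and]
  constructor
  · intro k hk
    obtain ⟨j, rfl⟩ : ∃ j, k = j + 1 := ⟨k - 1, by omega⟩
    have hj : j + 1 - 1 = j := by omega
    rw [hbad, hj, hmem j, hmem (j + 1)]
    constructor
    · rintro ⟨hin, hout⟩
      push_neg at hout
      obtain ⟨i, hi, hiC⟩ := hout
      have hik : i = j + 1 := by
        by_contra h
        exact hin i (by omega) hiC
      refine ⟨hik ▸ hiC, fun b hb => ?_⟩
      by_contra h
      exact hin b (by omega) hb
    · rintro ⟨hjC, hlb⟩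
      refine ⟨fun i hi hiC => by have := hlb hiC; omega, fun h => h (j + 1) le_rfl hjC⟩
  · rw [hbad]
    constructor
    · intro h
      refine ⟨hℓ, Set.eq_empty_iff_forall_notMem.mpr fun i hiC => ?_⟩
      exact (hmem i).mp (h i) i le_rfl hiC
    · rintro ⟨-, hC⟩ k
      rw [hmem k]
      intro i _ hiC
      rw [hC] at hiC
      exact hiC
end

section
/- For a finite graph G = (L,E) with E symmetric, and Boolean predicates φ̂₁, φ̂₂ on L, a location ℓ satisfies 'there exists A ⊆ L with ℓ ∈ A, φ̂₁ holds on all of A, and φ̂₂ holds on all of B⁺(A)' if and only if ℓ ⊨ φ̂₁ and there is no path p starting at ℓ and index i ≥ 1 such that p(i) ⊨ ¬φ̂₁ and p(j) ⊨ ¬φ̂₂ for all j ∈ {1,...,i}. -/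
theorem stmt16 {L : Type*} [Fintype L] (E : L → L → Prop) (hE : Symmetric E)
    (φ₁ φ₂ : L → Prop) (ℓ : L) :
    (∃ A : Set L, ℓ ∈ A ∧ (∀ ℓ' ∈ A, φ₁ ℓ') ∧
        (∀ ℓ'' ∈ extBoundary E A, φ₂ ℓ'')) ↔
      (φ₁ ℓ ∧ ¬ ∃ (p : ℕ → L) (i : ℕ), 1 ≤ i ∧ p 0 = ℓ ∧
        (∀ j, E (p j) (p (j + 1))) ∧ ¬ φ₁ (p i) ∧
        ∀ j, 1 ≤ j → j ≤ i → ¬ φ₂ (p j)) := by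
  classical
  constructor
  · rintro ⟨A, hℓA, hφ1, hφ2⟩
    refine ⟨hφ1 ℓ hℓA, ?_⟩
    rintro ⟨p, i, hi, hp0, hedge, hnφ1, hnφ2⟩
    have hmem : ∀ j, j ≤ i → p j ∈ A := by
      intro j
      induction j with
      | zero => intro _; rw [hp0]; exact hℓA
      | succ k ih =>
        intro hk
        have hkA := ih (by omega)
        by_contra hne
        exact hnφ2 (k + 1) (by omega) hk (hφ2 _ ⟨hne, p k, hkA, hedge k⟩)
    exact hnφ1 (hφ1 _ (hmem i le_rfl))
  · rintro ⟨hφ1ℓ, hnopath⟩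
    set A : Set L := {x | x = ℓ ∨ ∃ p : ℕ → L, ∃ i, 1 ≤ i ∧ p 0 = ℓ ∧
        (∀ j, E (p j) (p (j + 1))) ∧ p i = x ∧
        ∀ j, 1 ≤ j → j ≤ i → ¬ φ₂ (p j)} with hA
    refine ⟨A, Or.inl rfl, ?_, ?_⟩
    · rintro x (rfl | ⟨p, i, hi, hp0, hedge, hpi, hφ⟩)
      · exact hφ1ℓ
      · by_contra hx
        exact hnopath ⟨p, i, hi, hp0, hedge, by rw [hpi]; exact hx, hφ⟩
    · rintro y ⟨hyA, x, hxA, hxy⟩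
      by_contra hφ2y
      apply hyA
      rcases hxA with rfl | ⟨p, i, hi, hp0, hedge, hpi, hφ⟩
      · -- x = ℓ : bounce between ℓ and y
        refine Or.inr ⟨fun n => if n % 2 = 0 then x else y, 1, le_rfl, by norm_num, ?_, by norm_num, ?_⟩
        · intro j
          rcases Nat.even_or_odd j with h | h
          · have h0 : j % 2 = 0 := Nat.even_iff.mp h
            have h1 : (j + 1) % 2 = 1 := by omega
            simp only [h0, h1]
            simpa using hxy
          · have h0 : j % 2 = 1 := Nat.odd_iff.mp h
            have h1 : (j + 1) % 2 = 0 := by omega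
            simp only [h0, h1]
            simpa using hE hxy
        · intro j hj1 hj2
          have : j = 1 := by omega
          subst this
          norm_num
          exact hφ2y
      · -- extend the path p (which reaches x at time i) by bouncing on the edge x-y
        refine Or.inr ⟨fun n => if n ≤ i then p n else if (n - i) % 2 = 0 then x else y,
          i + 1, by omega, ?_, ?_, ?_, ?_⟩
        · simp [Nat.zero_le, hp0]
        · intro j
          by_cases h1 : j + 1 ≤ i
          · have h0 : j ≤ i := by omega
            simp only [h0, h1, if_pos]
            exact hedge j
          · by_cases h0 : j ≤ i
            · have hji : j = i := by omega
              have h2 : (j + 1 - i) % 2 = 1 := by omega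
              simp only [h0, if_pos, if_neg h1, h2]
              subst hji
              rw [hpi]
              simpa using hxy
            · have h2 : ¬ (j + 1 ≤ i) := by omega
              simp only [if_neg h0, if_neg h2]
              rcases Nat.even_or_odd (j - i) with h | h
              · have e0 : (j - i) % 2 = 0 := Nat.even_iff.mp h
                have e1 : (j + 1 - i) % 2 = 1 := by omega
                simp only [e0, e1]
                simpa using hxy
              · have e0 : (j - i) % 2 = 1 := Nat.odd_iff.mp h
                have e1 : (j + 1 - i) % 2 = 0 := by omega
                simp only [e0, e1]
                simpa using hE hxy
        · have h1 : ¬ (i + 1 ≤ i) := by omega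
          have h2 : (i + 1 - i) % 2 = 1 := by omega
          simp only [if_neg h1, h2]
          norm_num
        · intro j hj1 hj2
          by_cases h0 : j ≤ i
          · simp only [if_pos h0]
            exact hφ j hj1 h0
          · have hji : j = i + 1 := by omega
            have h2 : (j - i) % 2 = 1 := by omega
            simp only [if_neg h0, h2]
            norm_num
            exact hφ2y
end

section
/- Let L be finite, ℓ̂ ∈ L fixed, d a metric on L, and 0 ≤ d₁ ≤ d₂. Define s₁(ℓ) = ρ₁(ℓ) if d(ℓ̂,ℓ) ≤ d₂ and −∞ otherwise, and s₂(ℓ) = ρ₂(ℓ) if d₁ ≤ d(ℓ̂,ℓ) ≤ d₂ and −∞ otherwise, where ρ₁, ρ₂ : L → ℝ. Then max over A ⊆ L with ℓ̂ ∈ A of min( min_{ℓ ∈ A} s₁(ℓ), min_{ℓ ∈ B⁺(A)} s₂(ℓ) ) equals max over A ⊆ {ℓ : d(ℓ̂,ℓ) ≤ d₂} with ℓ̂ ∈ A and B⁺(A) ⊆ {ℓ : d₁ ≤ d(ℓ̂,ℓ) ≤ d₂} of min( min_{ℓ ∈ A} ρ₁(ℓ), min_{ℓ ∈ B⁺(A)}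 ρ₂(ℓ) ), provided the latter maximum is over a nonempty family and is > −∞. -/
theorem stmt17 {L : Type*} [Fintype L] [MetricSpace L]
    (E : L → L → Prop) (hE : Symmetric E)
    (ℓ₀ : L) (d₁ d₂ : ℝ) (hd₁ : 0 ≤ d₁) (hd : d₁ ≤ d₂)
    (ρ₁ ρ₂ : L → ℝ)
    (s₁ s₂ : L → EReal)
    (hs₁ : ∀ ℓ, s₁ ℓ = if dist ℓ₀ ℓ ≤ d₂ then (ρ₁ ℓ : EReal) else ⊥)
    (hs₂ : ∀ ℓ, s₂ ℓ = if d₁ ≤ dist ℓ₀ ℓ ∧ dist ℓ₀ ℓ ≤ d₂ then (ρ₂ ℓ : EReal) else ⊥)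
    (hne : ∃ A : Set L, ℓ₀ ∈ A ∧ A ⊆ {ℓ | dist ℓ₀ ℓ ≤ d₂} ∧
      extBoundary E A ⊆ {ℓ | d₁ ≤ dist ℓ₀ ℓ ∧ dist ℓ₀ ℓ ≤ d₂})
    (hbot : (⨆ A ∈ {A : Set L | ℓ₀ ∈ A ∧ A ⊆ {ℓ | dist ℓ₀ ℓ ≤ d₂} ∧
        extBoundary E A ⊆ {ℓ | d₁ ≤ dist ℓ₀ ℓ ∧ dist ℓ₀ ℓ ≤ d₂}},
        min (⨅ ℓ ∈ A, (ρ₁ ℓ : EReal)) (⨅ ℓ ∈ extBoundary E A, (ρ₂ ℓ : EReal))) > ⊥) :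
    (⨆ A ∈ {A : Set L | ℓ₀ ∈ A},
        min (⨅ ℓ ∈ A, s₁ ℓ) (⨅ ℓ ∈ extBoundary E A, s₂ ℓ)) =
    (⨆ A ∈ {A : Set L | ℓ₀ ∈ A ∧ A ⊆ {ℓ | dist ℓ₀ ℓ ≤ d₂} ∧
        extBoundary E A ⊆ {ℓ | d₁ ≤ dist ℓ₀ ℓ ∧ dist ℓ₀ ℓ ≤ d₂}},
        min (⨅ ℓ ∈ A, (ρ₁ ℓ : EReal)) (⨅ ℓ ∈ extBoundary E A, (ρ₂ ℓ : EReal))) := by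
  have key : ∀ A : Set L, A ⊆ {ℓ | dist ℓ₀ ℓ ≤ d₂} →
      extBoundary E A ⊆ {ℓ | d₁ ≤ dist ℓ₀ ℓ ∧ dist ℓ₀ ℓ ≤ d₂} →
      min (⨅ ℓ ∈ A, s₁ ℓ) (⨅ ℓ ∈ extBoundary E A, s₂ ℓ) =
      min (⨅ ℓ ∈ A, (ρ₁ ℓ : EReal)) (⨅ ℓ ∈ extBoundary E A, (ρ₂ ℓ : EReal)) := by
    intro A h1 h2
    congr 1
    · exact iInf_congr fun ℓ => iInf_congr fun hℓ => by rw [hs₁ ℓ, if_pos (show dist ℓ₀ ℓ ≤ d₂ from h1 hℓ)]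
    · exact iInf_congr fun ℓ => iInf_congr fun hℓ => by rw [hs₂ ℓ, if_pos (show d₁ ≤ dist ℓ₀ ℓ ∧ dist ℓ₀ ℓ ≤ d₂ from h2 hℓ)]
  apply le_antisymm
  · refine iSup₂_le fun A hA => ?_
    by_cases h1 : A ⊆ {ℓ | dist ℓ₀ ℓ ≤ d₂}
    · by_cases h2 : extBoundary E A ⊆ {ℓ | d₁ ≤ dist ℓ₀ ℓ ∧ dist ℓ₀ ℓ ≤ d₂}
      · rw [key A h1 h2]
        exact le_iSup₂ (f := fun A _ => min (⨅ ℓ ∈ A, (ρ₁ ℓ : EReal))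
          (⨅ ℓ ∈ extBoundary E A, (ρ₂ ℓ : EReal))) A ⟨hA, h1, h2⟩
      · obtain ⟨ℓ, hℓ, hv⟩ := Set.not_subset.mp h2
        have : (⨅ ℓ ∈ extBoundary E A, s₂ ℓ) ≤ s₂ ℓ := biInf_le _ hℓ
        have hv' : ¬(d₁ ≤ dist ℓ₀ ℓ ∧ dist ℓ₀ ℓ ≤ d₂) := hv
        rw [hs₂ ℓ, if_neg hv'] at this
        exact le_trans (le_trans (min_le_right _ _) this) bot_le
    · obtain ⟨ℓ, hℓ, hv⟩ := Set.not_subset.mp h1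
      have : (⨅ ℓ ∈ A, s₁ ℓ) ≤ s₁ ℓ := biInf_le _ hℓ
      have hv' : ¬(dist ℓ₀ ℓ ≤ d₂) := hv
      rw [hs₁ ℓ, if_neg hv'] at this
      exact le_trans (le_trans (min_le_left _ _) this) bot_le
  · refine iSup₂_le fun A hA => ?_
    rw [← key A hA.2.1 hA.2.2]
    exact le_iSup₂ (f := fun A _ => min (⨅ ℓ ∈ A, s₁ ℓ)
      (⨅ ℓ ∈ extBoundary E A, s₂ ℓ)) A hA.1
end
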